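/- arXiv:2604.21608 — 5 statements merged into one kernel-verified Lean document; each statement's English description precedes it below -/
import Mathlib

section
/- Let G : ℝⁿ → ℝⁿ be α-averaged with α ∈ (0,1), with nonempty fixed-point set Fix(G), and metrically subregular with constant σ > 0, i.e., dist(x, Fix(G)) ≤ σ ‖x − G x‖ for all x. Assume 1 − (1−α)/(α σ²) ≥ 0. Then for every x, dist(G x, Fix(G))² ≤ (1 − (1−α)/(α σ²)) · dist(x, Fix(G))², so the iteration x_{h+1} = G x_h converges linearly in distance to Fix(G) with rate μ = sqrt(1 − (1−α)/(α σ²)). -/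
set_option maxHeartbeats 1000000 in
/-- Linear convergence in distance to the fixed-point set of an α-averaged,
metrically subregular operator. -/
theorem stmt6 {n : ℕ} (α σ : ℝ) (hα : 0 < α) (hα1 : α < 1) (hσ : 0 < σ)
    (G : EuclideanSpace ℝ (Fin n) → EuclideanSpace ℝ (Fin n))
    (hGavg : ∃ T : EuclideanSpace ℝ (Fin n) → EuclideanSpace ℝ (Fin n),
      (∀ x y, ‖T x - T y‖ ≤ ‖x - y‖) ∧ ∀ x, G x = (1 - α) • x + α • T x)
    (hfix : ({z | G z = z} : Set (EuclideanSpace ℝ (Fin n))).Nonempty)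
    (hsub : ∀ x, Metric.infDist x {z | G z = z} ≤ σ * ‖x - G x‖)
    (hrate : 0 ≤ 1 - (1 - α) / (α * σ ^ 2)) :
    ∀ x, Metric.infDist (G x) {z | G z = z} ^ 2
      ≤ (1 - (1 - α) / (α * σ ^ 2)) * Metric.infDist x {z | G z = z} ^ 2 := by
  obtain ⟨T, hT, hG⟩ := hGavg
  set S : Set (EuclideanSpace ℝ (Fin n)) := {z | G z = z} with hSdef
  have hTc : Continuous T := by
    have : LipschitzWith 1 T :=
      LipschitzWith.of_dist_le_mul (fun x y => by
        simpa [dist_eq_norm] using hT x y)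
    exact this.continuous
  have hGc : Continuous G := by
    have : G = fun x => (1 - α) • x + α • T x := funext hG
    rw [this]
    exact ((continuous_const : Continuous fun _ : EuclideanSpace ℝ (Fin n) => (1 - α : ℝ)).smul continuous_id).add
      ((continuous_const : Continuous fun _ : EuclideanSpace ℝ (Fin n) => (α : ℝ)).smul hTc)
  have hSclosed : IsClosed S := isClosed_eq hGc continuous_id
  intro x
  obtain ⟨z, hzS, hzd⟩ := hSclosed.exists_infDist_eq_dist hfix x
  have hz : G z = z := hzS
  have hTz : T z = z := by
    rw [hG] at hz
    have h1 : α • T z = α • z := by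
      have : (1 - α) • z + α • T z - (1 - α) • z = z - (1 - α) • z := by rw [hz]
      rw [add_sub_cancel_left] at this
      rw [this, sub_smul, one_smul]
      abel
    exact smul_right_injective _ (ne_of_gt hα) h1
  set a := x - z with ha
  set b := T x - z with hb
  have hab : ‖b‖ ≤ ‖a‖ := by
    have := hT x z
    rwa [hTz] at this
  have hGz : G x - z = (1 - α) • a + α • b := by
    rw [hG, ha, hb]
    module
  have hxG : x - G x = α • (a - b) := by
    rw [hG, ha, hb]
    module
  have hnxG : ‖x - G x‖ = α * ‖a - b‖ := by
    rw [hxG, norm_smul, Real.norm_eq_abs, abs_of_pos hα]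
  have hexp : ‖G x - z‖ ^ 2 =
      (1 - α) ^ 2 * ‖a‖ ^ 2 + 2 * ((1 - α) * α * inner ℝ a b) + α ^ 2 * ‖b‖ ^ 2 := by
    rw [hGz, @norm_add_sq_real]
    rw [norm_smul, norm_smul, real_inner_smul_left, real_inner_smul_right,
      Real.norm_eq_abs, Real.norm_eq_abs, abs_of_pos hα, abs_of_pos (by linarith : (0:ℝ) < 1 - α)]
    ring
  have hsubexp : ‖a - b‖ ^ 2 = ‖a‖ ^ 2 - 2 * inner ℝ a b + ‖b‖ ^ 2 :=
    norm_sub_sq_real a b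
  have hkey : ‖G x - z‖ ^ 2 ≤ ‖a‖ ^ 2 - ((1 - α) / α) * ‖x - G x‖ ^ 2 := by
    rw [hexp, hnxG]
    have h1 : ((1 - α) / α) * (α * ‖a - b‖) ^ 2 = (1 - α) * α * ‖a - b‖ ^ 2 := by
      field_simp
    rw [h1, hsubexp]
    nlinarith [mul_nonneg hα.le (mul_nonneg (add_nonneg (norm_nonneg a) (norm_nonneg b))
      (sub_nonneg.mpr hab)), norm_nonneg a, norm_nonneg b]
  -- distances
  have hd : Metric.infDist x S = ‖a‖ := by rw [hzd, dist_eq_norm, ha]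
  have hdG : Metric.infDist (G x) S ≤ ‖G x - z‖ := by
    rw [← dist_eq_norm]
    exact Metric.infDist_le_dist_of_mem hzS
  have hdGnn : 0 ≤ Metric.infDist (G x) S := Metric.infDist_nonneg
  have hdG2 : Metric.infDist (G x) S ^ 2 ≤ ‖G x - z‖ ^ 2 := by
    nlinarith [hdG, hdGnn]
  have hsubx := hsub x
  rw [hd] at hsubx ⊢
  have hwnn : 0 ≤ ‖x - G x‖ := norm_nonneg _
  have hann : 0 ≤ ‖a‖ := norm_nonneg _
  have hsq : ‖a‖ ^ 2 ≤ σ ^ 2 * ‖x - G x‖ ^ 2 := by nlinarith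
  have hc1 : 0 ≤ (1 - α) / (α * σ ^ 2) := div_nonneg (by linarith) (by positivity)
  have hmul : ((1 - α) / (α * σ ^ 2)) * ‖a‖ ^ 2 ≤ ((1 - α) / α) * ‖x - G x‖ ^ 2 := by
    have h2 : ((1 - α) / (α * σ ^ 2)) * (σ ^ 2 * ‖x - G x‖ ^ 2) = ((1 - α) / α) * ‖x - G x‖ ^ 2 := by
      field_simp
    calc ((1 - α) / (α * σ ^ 2)) * ‖a‖ ^ 2
        ≤ ((1 - α) / (α * σ ^ 2)) * (σ ^ 2 * ‖x - G x‖ ^ 2) :=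
          mul_le_mul_of_nonneg_left hsq hc1
      _ = ((1 - α) / α) * ‖x - G x‖ ^ 2 := h2
  nlinarith [hdG2, hkey, hmul]
end

section
/- Let F_k = I + P − 2ρ P A_q H_k⁻¹ A_qᵀ where P and A_q are fixed matrices, ρ > 0, and H_k is symmetric positive definite. Suppose ker(I − T_k) ⊆ ker(A_qᵀ) where T_k = I − α F_k for α ≠ 0 (so that ker F_k ⊆ ker A_qᵀ). Then ker(F_k) = ker(I + P) ∩ ker(A_qᵀ). In particular, ker(F_k) does not depend on H_k. -/
open Matrix

/-- Structural invariance of ker(F_k): with F = I + P − 2ρ P A_q H⁻¹ A_qᵀ,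
T = I − αF, and ker(I − T) ⊆ ker(A_qᵀ), one has
ker F = ker(I + P) ∩ ker(A_qᵀ), independent of H. -/
theorem stmt7 {m p : ℕ} (σ : Equiv.Perm (Fin m)) (P : Matrix (Fin m) (Fin m) ℝ)
    (hP : P = σ.permMatrix ℝ)
    (Aq : Matrix (Fin m) (Fin p) ℝ) (ρ α : ℝ) (hρ : 0 < ρ) (hα : α ≠ 0)
    (H : Matrix (Fin p) (Fin p) ℝ) (hH : H.PosDef)
    (F T : Matrix (Fin m) (Fin m) ℝ)
    (hF : F = 1 + P - (2 * ρ) • (P * Aq * H⁻¹ * Aqᵀ))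
    (hT : T = 1 - α • F)
    (hker : ∀ v : Fin m → ℝ, ((1 : Matrix (Fin m) (Fin m) ℝ) - T).mulVec v = 0 →
      Aqᵀ.mulVec v = 0) :
    {v : Fin m → ℝ | F.mulVec v = 0}
      = {v : Fin m → ℝ | ((1 : Matrix (Fin m) (Fin m) ℝ) + P).mulVec v = 0}
        ∩ {v : Fin m → ℝ | Aqᵀ.mulVec v = 0} := by
  have key : ∀ v : Fin m → ℝ, F.mulVec v =
      ((1 : Matrix (Fin m) (Fin m) ℝ) + P).mulVec v
        - (2 * ρ) • (P * Aq * H⁻¹).mulVec (Aqᵀ.mulVec v) := by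
    intro v
    rw [hF, Matrix.sub_mulVec, Matrix.smul_mulVec,
      Matrix.mulVec_mulVec]
  ext v
  constructor
  · intro hv
    simp only [Set.mem_setOf_eq] at hv
    have hAq : Aqᵀ.mulVec v = 0 := by
      apply hker
      rw [hT]
      simp [Matrix.smul_mulVec, hv]
    have h1 : ((1 : Matrix (Fin m) (Fin m) ℝ) + P).mulVec v = 0 := by
      have := key v
      rw [hAq, hv] at this
      simpa using this.symm
    exact ⟨h1, hAq⟩
  · rintro ⟨h1, h2⟩
    simp only [Set.mem_setOf_eq] at h1 h2 ⊢
    rw [key v, h1, h2]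
    simp
end

section
/- Consider the nonnegative 2×2 comparison matrix 𝒜 = [[√γ, ε c₁₂], [c₂₁, μᴴ + ε c₂₂]] with γ, μ ∈ (0,1), H ≥ 1, and c₁₂, c₂₁, c₂₂ ≥ 0, ε > 0. If ε < (1−√γ)(1−μᴴ) / (c₁₂ c₂₁ + (1−√γ) c₂₂), then 𝒜₁₁ < 1, 𝒜₂₂ < 1, and det(I − 𝒜) > 0; consequently the spectral radius of 𝒜 is strictly less than 1 (𝒜 is Schur stable). -/
open Matrix

/-- Small-gain / M-matrix condition: under the bound on ε, the comparison
matrix 𝒜 has diagonal entries < 1, det(I − 𝒜) > 0, and is Schur stable. -/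
theorem stmt10 (γ μ ε c₁₂ c₂₁ c₂₂ : ℝ) (H : ℕ)
    (hγ : 0 < γ) (hγ1 : γ < 1) (hμ : 0 < μ) (hμ1 : μ < 1) (hH : 1 ≤ H)
    (hc12 : 0 ≤ c₁₂) (hc21 : 0 ≤ c₂₁) (hc22 : 0 ≤ c₂₂) (hε : 0 < ε)
    (hsg : ε < (1 - Real.sqrt γ) * (1 - μ ^ H)
      / (c₁₂ * c₂₁ + (1 - Real.sqrt γ) * c₂₂)) :
    Real.sqrt γ < 1 ∧ μ ^ H + ε * c₂₂ < 1 ∧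
    ((1 : Matrix (Fin 2) (Fin 2) ℝ)
      - !![Real.sqrt γ, ε * c₁₂; c₂₁, μ ^ H + ε * c₂₂]).det > 0 ∧
    spectralRadius ℂ
      ((!![Real.sqrt γ, ε * c₁₂; c₂₁, μ ^ H + ε * c₂₂]).map Complex.ofReal) < 1 := by
  set a := Real.sqrt γ with ha_def
  have ha0 : 0 ≤ a := Real.sqrt_nonneg γ
  have ha1 : a < 1 := by
    rw [ha_def, show (1:ℝ) = Real.sqrt 1 by simp]
    exact Real.sqrt_lt_sqrt hγ.le hγ1
  have hm0 : 0 < μ ^ H := pow_pos hμ H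
  have hm1 : μ ^ H < 1 := pow_lt_one₀ hμ.le hμ1 (by omega)
  set b := ε * c₁₂ with hb_def
  set c := c₂₁ with hc_def
  set d := μ ^ H + ε * c₂₂ with hd_def
  have hb0 : 0 ≤ b := by positivity
  have hc0 : 0 ≤ c := hc21
  have hd0 : 0 ≤ d := by positivity
  -- denominator positive
  have hD0 : 0 < c₁₂ * c₂₁ + (1 - a) * c₂₂ := by
    have hnn : (0:ℝ) ≤ c₁₂ * c₂₁ + (1 - a) * c₂₂ :=
      add_nonneg (mul_nonneg hc12 hc21) (mul_nonneg (by linarith) hc22)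
    rcases lt_or_eq_of_le hnn with h | h
    · exact h
    · rw [← h, div_zero] at hsg; linarith
  have hkey : b * c < (1 - a) * (1 - d) := by
    rw [lt_div_iff₀ hD0] at hsg
    nlinarith [hsg]
  have hd1 : d < 1 := by nlinarith
  refine ⟨ha1, hd1, ?_, ?_⟩
  · have : ((1 : Matrix (Fin 2) (Fin 2) ℝ) - !![a, b; c, d]).det
        = (1 - a) * (1 - d) - b * c := by
      simp [Matrix.det_fin_two, Matrix.one_apply]
    rw [this]; linarith
  -- spectral radius part
  · set t := a + d with ht_def
    set disc := (a - d)^2 + 4*(b*c) with hdisc_def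
    have hdisc0 : 0 ≤ disc := by positivity
    set s := Real.sqrt disc with hs_def
    have hs0 : 0 ≤ s := Real.sqrt_nonneg disc
    have hs2 : s^2 = disc := Real.sq_sqrt hdisc0
    have hslt : s < 2 - t := by nlinarith [hs2, hkey, hs0]
    set l1 := (t + s)/2 with hl1_def
    set l2 := (t - s)/2 with hl2_def
    have hsum : l1 + l2 = a + d := by rw [hl1_def, hl2_def, ht_def]; ring
    have hprod : l1 * l2 = a * d - b * c := by
      have h := hs2
      rw [hdisc_def] at h
      rw [hl1_def, hl2_def, ht_def]
      linear_combination (-(1:ℝ)/4) * h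
    have ht0 : 0 ≤ t := by rw [ht_def]; linarith
    have hl1lt : l1 < 1 := by rw [hl1_def]; linarith
    have hl2gt : -1 < l2 := by rw [hl2_def]; linarith
    have hl2le : l2 ≤ l1 := by rw [hl1_def, hl2_def]; linarith
    have hl10 : 0 ≤ l1 := by rw [hl1_def]; linarith
    have habs1 : |l1| < 1 := abs_lt.mpr ⟨by linarith, hl1lt⟩
    have habs2 : |l2| < 1 := abs_lt.mpr ⟨hl2gt, by linarith⟩
    set M := (!![a, b; c, d]).map Complex.ofReal with hM_def
    have key : ∀ k : ℂ, k ∈ spectrum ℂ M → k = (l1:ℂ) ∨ k = (l2:ℂ) := by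
      intro k hk
      rw [spectrum.mem_iff, Matrix.isUnit_iff_isUnit_det, isUnit_iff_ne_zero, not_not] at hk
      have hdet : (k - (a:ℂ)) * (k - (d:ℂ)) - (b:ℂ) * (c:ℂ) = 0 := by
        rw [Matrix.det_fin_two] at hk
        simp [hM_def, Matrix.algebraMap_matrix_apply, Matrix.map_apply, Matrix.sub_apply] at hk
        linear_combination hk
      have h1 : (l1:ℂ) + (l2:ℂ) = (a:ℂ) + (d:ℂ) := by exact_mod_cast hsum
      have h2 : (l1:ℂ) * (l2:ℂ) = (a:ℂ) * (d:ℂ) - (b:ℂ) * (c:ℂ) := by exact_mod_cast hprod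
      have : (k - (l1:ℂ)) * (k - (l2:ℂ)) = 0 := by linear_combination hdet - k * h1 + h2
      rcases mul_eq_zero.mp this with h | h
      · exact Or.inl (sub_eq_zero.mp h)
      · exact Or.inr (sub_eq_zero.mp h)
    have hub : spectralRadius ℂ M ≤ ENNReal.ofReal (max |l1| |l2|) := by
      rw [spectralRadius]
      refine iSup₂_le fun k hk => ?_
      have hn : ‖k‖ ≤ max |l1| |l2| := by
        rcases key k hk with rfl | rfl
        · simp [le_max_left]
        · simp [le_max_right]
      calc (↑‖k‖₊ : ENNReal) = ENNReal.ofReal ‖k‖ := (ofReal_norm k).symm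
        _ ≤ _ := ENNReal.ofReal_le_ofReal hn
    refine lt_of_le_of_lt hub ?_
    rw [show (1:ENNReal) = ENNReal.ofReal 1 by simp]
    exact ENNReal.ofReal_lt_ofReal_iff (by norm_num) |>.mpr (max_lt habs1 habs2)
end

section
/- Let S_{k|k-1}, S_{k|k}, S_{k+1|k} be symmetric positive definite with S_{k|k} ⪰ S_{k|k-1} and A_kᵀ S_{k+1|k} A_k = γ S_{k|k} for some γ ∈ (0,1) (A_k invertible). Define V_k = x̃_kᵀ S_{k|k-1} x̃_k along the reduced dynamics x̃_{k+1} = A_k S_{k|k}⁻¹ S_{k|k-1} x̃_k. Then V_{k+1} ≤ γ V_k. Moreover, if additionally S_{k|k-1} ⪰ s̲ I with s̲ > 0 for all k, then V_{k+1} − V_k ≤ −(1−γ) s̲ ‖x̃_k‖², and ‖x̃_k‖² ≤ (s̄/s̲) γᵏ ‖x̃₀‖² whenever also S_{k|k-1} ⪯ s̄ I. -/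
open Matrix

private lemma quad_eq {n : ℕ} (B C : Matrix (Fin n) (Fin n) ℝ) (x : Fin n → ℝ) :
    (B *ᵥ x) ⬝ᵥ C *ᵥ (B *ᵥ x) = x ⬝ᵥ (Bᵀ * C * B) *ᵥ x := by
  rw [← mulVec_mulVec, ← mulVec_mulVec, dotProduct_mulVec x, vecMul_transpose]

private lemma schur_psd {n : ℕ} {M P : Matrix (Fin n) (Fin n) ℝ}
    (hM : M.PosDef) (hP : P.PosDef) (hMP : (M - P).PosSemidef) :
    (P - P * M⁻¹ * P).PosSemidef := by
  have hd : IsUnit M.det := isUnit_iff_isUnit_det M |>.mp hM.isUnit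
  have key : P - P * M⁻¹ * P
      = (1 - M⁻¹ * P)ᵀ * P * (1 - M⁻¹ * P) + (M⁻¹ * P)ᵀ * (M - P) * (M⁻¹ * P) := by
    have hPs : Pᵀ = P := hP.isHermitian.eq
    have hMs : (M⁻¹)ᵀ = M⁻¹ := (hM.isHermitian.inv).eq
    simp only [transpose_sub, transpose_one, transpose_mul, hPs, hMs]
    rw [show (1 - P * M⁻¹) * P * (1 - M⁻¹ * P)
        = (P - P * M⁻¹ * P) - (P - P * M⁻¹ * P) * (M⁻¹ * P) from by
        rw [sub_mul 1, one_mul, mul_sub, mul_one],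
      show P * M⁻¹ * (M - P) * (M⁻¹ * P) = (P - P * M⁻¹ * P) * (M⁻¹ * P) from by
        rw [mul_sub (P * M⁻¹), sub_mul, mul_assoc P M⁻¹ M, nonsing_inv_mul M hd, mul_one]
        simp only [sub_mul, mul_assoc]]
    abel
  rw [key]
  have h1 : ((1 - M⁻¹ * P)ᵀ * P * (1 - M⁻¹ * P)).PosSemidef := by
    have := hP.posSemidef.conjTranspose_mul_mul_same (1 - M⁻¹ * P)
    simpa using this
  have h2 : ((M⁻¹ * P)ᵀ * (M - P) * (M⁻¹ * P)).PosSemidef := by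
    have := hMP.conjTranspose_mul_mul_same (M⁻¹ * P)
    simpa using this
  exact h1.add h2

/-- Lyapunov decay of the reduced observer error dynamics:
V_{k+1} ≤ γ V_k; with uniform lower bound on S_{k|k-1}, a strict decrement;
with both bounds, exponential decay of ‖x̃_k‖². -/
theorem stmt14 {n : ℕ} (γ sl su : ℝ) (hγ : 0 < γ) (hγ1 : γ < 1) (hsl : 0 < sl)
    (A : ℕ → Matrix (Fin n) (Fin n) ℝ) (hA : ∀ k, IsUnit (A k))
    (Sprior Spost : ℕ → Matrix (Fin n) (Fin n) ℝ)
    (hprior : ∀ k, (Sprior k).PosDef) (hpost : ∀ k, (Spost k).PosDef)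
    (hmono : ∀ k, (Spost k - Sprior k).PosSemidef)
    (hpred : ∀ k, (A k)ᵀ * Sprior (k + 1) * A k = γ • Spost k)
    (xt : ℕ → (Fin n → ℝ))
    (hdyn : ∀ k, xt (k + 1) = (A k * (Spost k)⁻¹ * Sprior k).mulVec (xt k)) :
    (∀ k, xt (k + 1) ⬝ᵥ (Sprior (k + 1)).mulVec (xt (k + 1))
        ≤ γ * (xt k ⬝ᵥ (Sprior k).mulVec (xt k))) ∧
    ((∀ k, (Sprior k - sl • (1 : Matrix (Fin n) (Fin n) ℝ)).PosSemidef) →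
      (∀ k, xt (k + 1) ⬝ᵥ (Sprior (k + 1)).mulVec (xt (k + 1))
          - xt k ⬝ᵥ (Sprior k).mulVec (xt k)
        ≤ -((1 - γ) * sl) * (xt k ⬝ᵥ xt k)) ∧
      ((∀ k, (su • (1 : Matrix (Fin n) (Fin n) ℝ) - Sprior k).PosSemidef) →
        ∀ k, xt k ⬝ᵥ xt k ≤ (su / sl) * γ ^ k * (xt 0 ⬝ᵥ xt 0))) := by
  have hdet : ∀ k, IsUnit (Spost k).det := fun k =>
    isUnit_iff_isUnit_det _ |>.mp (hpost k).isUnit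
  -- main decay
  have main : ∀ k, xt (k + 1) ⬝ᵥ (Sprior (k + 1)).mulVec (xt (k + 1))
      ≤ γ * (xt k ⬝ᵥ (Sprior k).mulVec (xt k)) := by
    intro k
    set P := Sprior k
    set M := Spost k
    have hMi : (M⁻¹)ᵀ = M⁻¹ := (hpost k).isHermitian.inv.eq
    have hPs : Pᵀ = P := (hprior k).isHermitian.eq
    have hBC : (A k * M⁻¹ * P)ᵀ * Sprior (k + 1) * (A k * M⁻¹ * P)
        = γ • (P * M⁻¹ * P) := by
      simp only [transpose_mul, hMi, hPs]
      rw [show P * (M⁻¹ * (A k)ᵀ) * Sprior (k + 1) * (A k * M⁻¹ * P)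
          = P * M⁻¹ * ((A k)ᵀ * Sprior (k + 1) * A k) * (M⁻¹ * P) from by noncomm_ring,
        hpred k,
        show P * M⁻¹ * (γ • M) * (M⁻¹ * P) = γ • (P * (M⁻¹ * M) * (M⁻¹ * P)) from by
          simp only [Matrix.mul_smul, Matrix.smul_mul]; noncomm_ring,
        nonsing_inv_mul M (hdet k), mul_one, mul_assoc]
    rw [hdyn k, quad_eq, hBC]
    have hle : xt k ⬝ᵥ (P * M⁻¹ * P) *ᵥ xt k ≤ xt k ⬝ᵥ P *ᵥ xt k := by
      have h := (schur_psd (hpost k) (hprior k) (hmono k)).dotProduct_mulVec_nonneg (xt k)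
      simp only [star_trivial, sub_mulVec, dotProduct_sub] at h
      linarith
    rw [smul_mulVec, dotProduct_smul, smul_eq_mul]
    exact mul_le_mul_of_nonneg_left hle hγ.le
  refine ⟨main, fun hlb => ?_⟩
  have hVlb : ∀ k, sl * (xt k ⬝ᵥ xt k) ≤ xt k ⬝ᵥ (Sprior k).mulVec (xt k) := by
    intro k
    have h := (hlb k).dotProduct_mulVec_nonneg (xt k)
    simp only [star_trivial, sub_mulVec, dotProduct_sub, smul_mulVec,
      one_mulVec, dotProduct_smul, smul_eq_mul] at h
    linarith
  have hVnn : ∀ k, 0 ≤ xt k ⬝ᵥ (Sprior k).mulVec (xt k) := fun k =>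
    (hprior k).posSemidef.dotProduct_mulVec_nonneg (xt k)
  have hxnn : ∀ k, 0 ≤ xt k ⬝ᵥ xt k := fun k => Finset.sum_nonneg fun i _ => mul_self_nonneg _
  constructor
  · intro k
    have h1 := main k
    have h2 := hVlb k
    nlinarith [hxnn k]
  · intro hub k
    have hVk : ∀ j, xt j ⬝ᵥ (Sprior j).mulVec (xt j)
        ≤ γ ^ j * (xt 0 ⬝ᵥ (Sprior 0).mulVec (xt 0)) := by
      intro j
      induction j with
      | zero => simp
      | succ j ih =>
        calc xt (j+1) ⬝ᵥ (Sprior (j+1)).mulVec (xt (j+1))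
            ≤ γ * (xt j ⬝ᵥ (Sprior j).mulVec (xt j)) := main j
          _ ≤ γ * (γ ^ j * (xt 0 ⬝ᵥ (Sprior 0).mulVec (xt 0))) :=
              mul_le_mul_of_nonneg_left ih hγ.le
          _ = γ ^ (j+1) * (xt 0 ⬝ᵥ (Sprior 0).mulVec (xt 0)) := by ring
    have hV0 : xt 0 ⬝ᵥ (Sprior 0).mulVec (xt 0) ≤ su * (xt 0 ⬝ᵥ xt 0) := by
      have h := (hub 0).dotProduct_mulVec_nonneg (xt 0)
      simp only [star_trivial, sub_mulVec, dotProduct_sub, smul_mulVec,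
        one_mulVec, dotProduct_smul, smul_eq_mul] at h
      linarith
    have := hVlb k
    have := hVk k
    have hγk : (0:ℝ) ≤ γ ^ k := pow_nonneg hγ.le k
    rw [div_mul_eq_mul_div, div_mul_eq_mul_div, le_div_iff₀ hsl]
    nlinarith
end

section
/- Let F₁, F₂ be matrices with the same kernel, c₁ ∈ range(F₁), c₂ ∈ range(F₂), and define the affine solution sets C₁ = {q : F₁ q = c₁}, C₂ = {q : F₂ q = c₂}. Then for every w ∈ C₁, dist(w, C₂) = dist(q_ref, C₂) where q_ref = F₁† c₁ is the minimum-norm solution of F₁ q = c₁; consequently sup_{w∈C₁} dist(w, C₂) ≤ ‖F₂†‖ (‖F₂ − F₁‖ ‖F₁† c₁‖ + ‖c₂ − c₁‖). -/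
open Matrix

/-- Euclidean norm of a vector. -/
noncomputable def euclNorm {m : ℕ} (v : Fin m → ℝ) : ℝ := Real.sqrt (v ⬝ᵥ v)

/-- G is the Moore–Penrose pseudoinverse of F. -/
def IsMoorePenrose {m n : ℕ} (F : Matrix (Fin m) (Fin n) ℝ)
    (G : Matrix (Fin n) (Fin m) ℝ) : Prop :=
  F * G * F = F ∧ G * F * G = G ∧ (F * G)ᵀ = F * G ∧ (G * F)ᵀ = G * F

/-- Distance of a point x to the affine set C₂ = {q : F₂ q = c₂}. -/
noncomputable def distToSol {m n : ℕ} (F₂ : Matrix (Fin m) (Fin n) ℝ)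
    (c₂ : Fin m → ℝ) (x : Fin n → ℝ) : ℝ :=
  sInf {r : ℝ | ∃ z : Fin n → ℝ, F₂.mulVec z = c₂ ∧ r = euclNorm (x - z)}

lemma euclNorm_eq_norm {k : ℕ} (v : Fin k → ℝ) :
    euclNorm v = ‖(WithLp.equiv 2 (Fin k → ℝ)).symm v‖ := by
  rw [EuclideanSpace.norm_eq]
  unfold euclNorm dotProduct
  congr 1
  refine Finset.sum_congr rfl fun i _ => ?_
  simp [Real.norm_eq_abs, sq_abs, sq]

lemma euclNorm_nonneg {k : ℕ} (v : Fin k → ℝ) : 0 ≤ euclNorm v := by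
  rw [euclNorm_eq_norm]; exact norm_nonneg _

lemma euclNorm_zero {k : ℕ} : euclNorm (0 : Fin k → ℝ) = 0 := by
  rw [euclNorm_eq_norm]; simp

lemma euclNorm_sub_le {k : ℕ} (a b : Fin k → ℝ) :
    euclNorm (a - b) ≤ euclNorm a + euclNorm b := by
  rw [euclNorm_eq_norm, euclNorm_eq_norm, euclNorm_eq_norm]
  exact norm_sub_le _ _

lemma distToSol_congr {m n : ℕ} (F₂ : Matrix (Fin m) (Fin n) ℝ) (c₂ : Fin m → ℝ)
    {x y : Fin n → ℝ} (h : F₂.mulVec x = F₂.mulVec y) :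
    distToSol F₂ c₂ x = distToSol F₂ c₂ y := by
  have aux : ∀ x y : Fin n → ℝ, F₂.mulVec x = F₂.mulVec y →
      {r : ℝ | ∃ z, F₂.mulVec z = c₂ ∧ r = euclNorm (x - z)} ⊆
      {r : ℝ | ∃ z, F₂.mulVec z = c₂ ∧ r = euclNorm (y - z)} := by
    rintro x y hxy r ⟨z, hz, rfl⟩
    refine ⟨z - x + y, ?_, ?_⟩
    · rw [mulVec_add, mulVec_sub, hz, hxy]
      abel
    · congr 1
      abel
  unfold distToSol
  exact congrArg sInf (Set.Subset.antisymm (aux x y h) (aux y x h.symm))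

/-- Drift of the solution set: for affine sets with a common direction space
(ker F₁ = ker F₂), every point of C₁ is equidistant from C₂, the distance
equals that of the minimum-norm solution q_ref = F₁† c₁, and it is bounded by
‖F₂†‖(‖F₂ − F₁‖ ‖F₁† c₁‖ + ‖c₂ − c₁‖). -/
theorem stmt18 {m n : ℕ} (F₁ F₂ : Matrix (Fin m) (Fin n) ℝ)
    (F₁dag F₂dag : Matrix (Fin n) (Fin m) ℝ)
    (h₁dag : IsMoorePenrose F₁ F₁dag) (h₂dag : IsMoorePenrose F₂ F₂dag)
    (hker : ∀ v : Fin n → ℝ, F₁.mulVec v = 0 ↔ F₂.mulVec v = 0)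
    (c₁ c₂ : Fin m → ℝ)
    (hc₁ : ∃ q0 : Fin n → ℝ, F₁.mulVec q0 = c₁)
    (hc₂ : ∃ q0 : Fin n → ℝ, F₂.mulVec q0 = c₂)
    (nF2d nΔ : ℝ)
    (hF2d : ∀ x : Fin m → ℝ, euclNorm (F₂dag.mulVec x) ≤ nF2d * euclNorm x)
    (hΔ : ∀ x : Fin n → ℝ, euclNorm ((F₂ - F₁).mulVec x) ≤ nΔ * euclNorm x) :
    ∀ w : Fin n → ℝ, F₁.mulVec w = c₁ →
      distToSol F₂ c₂ w = distToSol F₂ c₂ (F₁dag.mulVec c₁) ∧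
      distToSol F₂ c₂ w
        ≤ nF2d * (nΔ * euclNorm (F₁dag.mulVec c₁) + euclNorm (c₂ - c₁)) := by
  obtain ⟨q0₁, hq0₁⟩ := hc₁
  obtain ⟨q0₂, hq0₂⟩ := hc₂
  intro w hw
  set q : Fin n → ℝ := F₁dag.mulVec c₁ with hqdef
  -- F₁ q = c₁
  have hF1q : F₁.mulVec q = c₁ := by
    rw [hqdef, ← hq0₁, mulVec_mulVec, mulVec_mulVec, h₁dag.1]
  -- F₂ F₂dag fixes c₂
  have hFFc₂ : (F₂ * F₂dag).mulVec c₂ = c₂ := by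
    rw [← hq0₂, mulVec_mulVec, h₂dag.1]
  -- part 1
  have hsame : F₂.mulVec w = F₂.mulVec q := by
    have h1 : F₁.mulVec (w - q) = 0 := by rw [mulVec_sub, hw, hF1q, sub_self]
    have h2 := (hker _).mp h1
    rwa [mulVec_sub, sub_eq_zero] at h2
  have part1 : distToSol F₂ c₂ w = distToSol F₂ c₂ q := distToSol_congr F₂ c₂ hsame
  -- the defect vector
  set v : Fin m → ℝ := F₂.mulVec q - c₂ with hvdef
  set z : Fin n → ℝ := q - F₂dag.mulVec v with hzdef
  have hz : F₂.mulVec z = c₂ := by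
    have hfix : F₂.mulVec (F₂dag.mulVec v) = v := by
      rw [mulVec_mulVec, hvdef, mulVec_sub, hFFc₂, mulVec_mulVec, h₂dag.1]
    rw [hzdef, mulVec_sub, hfix, hvdef, sub_sub_cancel]
  have hbdd : BddBelow {r : ℝ | ∃ z, F₂.mulVec z = c₂ ∧ r = euclNorm (q - z)} :=
    ⟨0, by rintro r ⟨z', _, rfl⟩; exact euclNorm_nonneg _⟩
  have hdist : distToSol F₂ c₂ q ≤ euclNorm (F₂dag.mulVec v) := by
    have hmem : euclNorm (F₂dag.mulVec v)
        ∈ {r : ℝ | ∃ z, F₂.mulVec z = c₂ ∧ r = euclNorm (q - z)} := by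
      refine ⟨z, hz, ?_⟩
      rw [hzdef, sub_sub_cancel]
    exact csInf_le hbdd hmem
  -- bound on ‖v‖
  have hv2 : v = (F₂ - F₁).mulVec q - (c₂ - c₁) := by
    rw [hvdef, sub_mulVec, hF1q]
    abel
  have hvbound : euclNorm v ≤ nΔ * euclNorm q + euclNorm (c₂ - c₁) := by
    calc euclNorm v ≤ euclNorm ((F₂ - F₁).mulVec q) + euclNorm (c₂ - c₁) := by
          rw [hv2]; exact euclNorm_sub_le _ _
      _ ≤ nΔ * euclNorm q + euclNorm (c₂ - c₁) :=
          add_le_add (hΔ q) le_rfl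
  have hmain : distToSol F₂ c₂ q ≤ nF2d * euclNorm v :=
    le_trans hdist (hF2d v)
  refine ⟨part1, ?_⟩
  rw [part1]
  by_cases hn : 0 ≤ nF2d
  · exact le_trans hmain (mul_le_mul_of_nonneg_left hvbound hn)
  · -- nF2d < 0 forces m = 0
    push_neg at hn
    have hm : m = 0 := by
      by_contra hm0
      have hpos : 0 < m := Nat.pos_of_ne_zero hm0
      set x : Fin m → ℝ := Pi.single ⟨0, hpos⟩ 1 with hxdef
      have hx : euclNorm x = 1 := by
        have : x ⬝ᵥ x = 1 := by
          rw [hxdef]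
          simp [dotProduct, Pi.single_apply]
        rw [euclNorm, this, Real.sqrt_one]
      have h1 := hF2d x
      rw [hx, mul_one] at h1
      have := euclNorm_nonneg (F₂dag.mulVec x)
      linarith
    subst hm
    have hc0 : (c₂ - c₁ : Fin 0 → ℝ) = 0 := funext fun i => i.elim0
    have hv0 : v = 0 := funext fun i => i.elim0
    have hq0 : q = 0 := by
      rw [hqdef]
      funext j
      simp [mulVec, dotProduct]
    rw [hc0, hq0, euclNorm_zero, euclNorm_zero, mul_zero, add_zero, mul_zero]
    calc distToSol F₂ c₂ q ≤ euclNorm (F₂dag.mulVec v) := hdist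
      _ = 0 := by rw [hv0, mulVec_zero, euclNorm_zero]
end
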